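/- arXiv:1802.01851 — 2 statements merged into one kernel-verified Lean document; each statement's English description precedes it below -/
import Mathlib

section
/- For every finite non-abelian simple group G₀ and N ≥ 1, the outer automorphism group Out(G₀^N) is isomorphic to Out(G₀)^N ⋊ S_N, with S_N acting by permutation of the factors. -/
/-- The subgroup of inner automorphisms is normal in `Aut(G)`. -/
instance innNormal (G : Type) [Group G] :
    ((MulAut.conj : G →* MulAut G).range).Normal := by
  constructor
  rintro x ⟨h, rfl⟩ g
  exact ⟨g h, by ext y; simp [mul_assoc]⟩

/-- The outer automorphism group `Out(G) = Aut(G)/Inn(G)`. -/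
def Out (G : Type) [Group G] : Type :=
  MulAut G ⧸ (MulAut.conj : G →* MulAut G).range

instance (G : Type) [Group G] : Group (Out G) :=
  QuotientGroup.Quotient.group _

/-- The action of the symmetric group on a direct power, permuting the coordinates. -/
def permMulAut (N : ℕ) (A : Type) [Group A] :
    Equiv.Perm (Fin N) →* MulAut (Fin N → A) where
  toFun σ :=
    { toFun := fun f i => f (σ⁻¹ i)
      invFun := fun f i => f (σ i)
      left_inv := fun f => by funext i; simp
      right_inv := fun f => by funext i; simp
      map_mul' := fun f g => rfl }
  map_one' := by ext f i; simp
  map_mul' := fun σ τ => by ext f i; simp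


/-!
In `G^N`, with `G` simple and centreless, every nontrivial normal subgroup `K` contains a whole
coordinate factor: the commutator of some `n ∈ K` with an element of a factor on which `n` is
nontrivial is a nontrivial element of `K` lying in that factor, and its normal closure there is
the whole factor because `G` is simple. So the factors are the minimal normal subgroups, every
automorphism permutes them, and `(η, σ) ↦ (f ↦ fun j => η j (f (σ⁻¹ j)))` is an isomorphism
`Aut(G)^N ⋊ S_N ≃* Aut(G^N)`. It maps `Inn(G)^N` onto `Inn(G^N)`; dividing by it leaves
`Out(G)^N ⋊ S_N`.
-/

open scoped commutatorElement

theorem IsSimpleGroup.center_eq_bot {G : Type*} [Group G] [IsSimpleGroup G]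
    (hG : ¬ ∀ a b : G, a * b = b * a) : Subgroup.center G = ⊥ :=
  (Subgroup.center G).normal_of_characteristic.eq_bot_or_eq_top.resolve_right fun h =>
    hG fun a b => Subgroup.mem_center_iff.1 (h ▸ Subgroup.mem_top b) a

theorem exists_commutatorElement_ne_one {G : Type*} [Group G] (hG : Subgroup.center G = ⊥)
    {x : G} (hx : x ≠ 1) : ∃ g : G, ⁅g, x⁆ ≠ 1 := by
  by_contra! h
  refine hx ((Subgroup.mem_bot).1 (hG ▸ Subgroup.mem_center_iff.2 fun g => ?_))
  rw [← commutatorElement_eq_one_iff_mul_comm, h g]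

section Factors

variable {ι G : Type*} [Group G] [DecidableEq ι]

variable (G) in
def factorSubgroup (i : ι) : Subgroup (ι → G) :=
  (MonoidHom.mulSingle (fun _ : ι => G) i).range

theorem mulSingle_mem_factorSubgroup (i : ι) (x : G) :
    Pi.mulSingle i x ∈ factorSubgroup G i :=
  ⟨x, rfl⟩

theorem mem_factorSubgroup_iff {i : ι} {f : ι → G} :
    f ∈ factorSubgroup G i ↔ ∀ j, j ≠ i → f j = 1 := by
  refine ⟨?_, fun h => ⟨f i, funext fun j => ?_⟩⟩
  · rintro ⟨x, rfl⟩ j hj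
    exact Pi.mulSingle_eq_of_ne (M := fun _ => G) hj x
  · rcases eq_or_ne j i with rfl | hj
    · exact Pi.mulSingle_eq_same j _
    · rw [MonoidHom.mulSingle_apply, Pi.mulSingle_eq_of_ne hj, h j hj]

instance factorSubgroup_normal (i : ι) : (factorSubgroup G i).Normal :=
  ⟨fun f hf g => mem_factorSubgroup_iff.2 fun j hj => by
    simp [mem_factorSubgroup_iff.1 hf j hj]⟩

instance map_factorSubgroup_normal (φ : MulAut (ι → G)) (i : ι) :
    ((factorSubgroup G i).map (φ : (ι → G) →* ι → G)).Normal :=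
  (factorSubgroup_normal i).map _ φ.surjective

theorem commutatorElement_mulSingle (i : ι) (g : G) (n : ι → G) :
    ⁅(Pi.mulSingle i g : ι → G), n⁆ = Pi.mulSingle i ⁅g, n i⁆ := by
  funext j
  rcases eq_or_ne j i with rfl | hj
  · simp [commutatorElement_def]
  · simp [commutatorElement_def, Pi.mulSingle_eq_of_ne hj]

section Nontrivial

variable [Nontrivial G]

theorem factorSubgroup_ne_bot (i : ι) : factorSubgroup G i ≠ ⊥ := by
  rw [factorSubgroup, Ne, MonoidHom.range_eq_bot_iff]
  obtain ⟨x, hx⟩ := exists_ne (1 : G)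
  exact fun h => hx (by simpa using congrFun (DFunLike.congr_fun h x) i)

theorem map_factorSubgroup_ne_bot (φ : MulAut (ι → G)) (i : ι) :
    (factorSubgroup G i).map (φ : (ι → G) →* ι → G) ≠ ⊥ := fun h =>
  factorSubgroup_ne_bot i ((Subgroup.map_eq_bot_iff_of_injective _ φ.injective).1 h)

theorem factorSubgroup_le_factorSubgroup_iff {i j : ι} :
    factorSubgroup G i ≤ factorSubgroup G j ↔ i = j := by
  refine ⟨fun h => ?_, fun h => h ▸ le_rfl⟩
  obtain ⟨x, hx⟩ := exists_ne (1 : G)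
  obtain ⟨y, hy⟩ := h (mulSingle_mem_factorSubgroup i x)
  by_contra hij
  have := congrFun hy i
  simp [Pi.mulSingle_eq_of_ne hij, hx.symm] at this

theorem factorSubgroup_injective :
    Function.Injective (factorSubgroup G : ι → Subgroup (ι → G)) := fun _ _ h =>
  factorSubgroup_le_factorSubgroup_iff.1 h.le

end Nontrivial

section Simple

variable [IsSimpleGroup G]

theorem exists_factorSubgroup_le (hG : Subgroup.center G = ⊥) {K : Subgroup (ι → G)}
    [hK : K.Normal] (hK₀ : K ≠ ⊥) : ∃ i, factorSubgroup G i ≤ K := by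
  obtain ⟨n, hnK, hn⟩ : ∃ n ∈ K, n ≠ 1 := by simpa [Subgroup.eq_bot_iff_forall] using hK₀
  obtain ⟨i, hi⟩ : ∃ i, n i ≠ 1 := by
    by_contra! h
    exact hn (funext h)
  obtain ⟨g, hg⟩ := exists_commutatorElement_ne_one hG hi
  have hT : K.comap (MonoidHom.mulSingle (fun _ : ι => G) i) = ⊤ := by
    refine (hK.comap _).eq_bot_or_eq_top.resolve_left fun h => hg ?_
    rw [← Subgroup.mem_bot, ← h, Subgroup.mem_comap, MonoidHom.mulSingle_apply,
      ← commutatorElement_mulSingle]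
    exact K.mul_mem (hK.conj_mem n hnK _) (K.inv_mem hnK)
  refine ⟨i, ?_⟩
  rw [factorSubgroup, MonoidHom.range_eq_map, Subgroup.map_le_iff_le_comap, hT]

theorem eq_factorSubgroup_of_le (hG : Subgroup.center G = ⊥) {K : Subgroup (ι → G)} [K.Normal]
    (hK₀ : K ≠ ⊥) {i : ι} (hK : K ≤ factorSubgroup G i) : K = factorSubgroup G i := by
  obtain ⟨j, hj⟩ := exists_factorSubgroup_le hG hK₀
  obtain rfl := factorSubgroup_le_factorSubgroup_iff.1 (hj.trans hK)
  exact le_antisymm hK hj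

theorem exists_map_factorSubgroup_eq (hG : Subgroup.center G = ⊥) (φ : MulAut (ι → G))
    (i : ι) : ∃ j, (factorSubgroup G i).map (φ : (ι → G) →* ι → G) = factorSubgroup G j := by
  obtain ⟨j, hj⟩ := exists_factorSubgroup_le hG (map_factorSubgroup_ne_bot φ i)
  refine ⟨j, (Subgroup.map_symm_eq_iff_map_eq _).1 <|
    eq_factorSubgroup_of_le hG (map_factorSubgroup_ne_bot φ.symm j) ?_⟩
  exact (Subgroup.map_mono hj).trans ((Subgroup.map_symm_eq_iff_map_eq _).2 rfl).le

theorem exists_perm_map_factorSubgroup_eq [Finite ι] (hG : Subgroup.center G = ⊥)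
    (φ : MulAut (ι → G)) :
    ∃ σ : Equiv.Perm ι, ∀ i,
      (factorSubgroup G i).map (φ : (ι → G) →* ι → G) = factorSubgroup G (σ i) := by
  choose σ hσ using exists_map_factorSubgroup_eq hG φ
  have hinj : Function.Injective σ := fun i i' h =>
    factorSubgroup_injective (Subgroup.map_injective φ.injective (by rw [hσ, hσ, h]))
  exact ⟨Equiv.ofBijective σ (Finite.injective_iff_bijective.1 hinj), hσ⟩

end Simple

theorem exists_mulAut_map_mulSingle (φ : MulAut (ι → G)) {i j : ι}
    (h : (factorSubgroup G i).map (φ : (ι → G) →* ι → G) = factorSubgroup G j) :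
    ∃ α : MulAut G, ∀ x, φ (Pi.mulSingle i x) = Pi.mulSingle j (α x) := by
  have hsingle : ∀ x, ∃ y, Pi.mulSingle j y = φ (Pi.mulSingle i x) := fun x =>
    h.le (Subgroup.mem_map_of_mem _ (mulSingle_mem_factorSubgroup i x))
  let f : G →* G := (Pi.evalMonoidHom _ j).comp
    ((φ : (ι → G) →* ι → G).comp (MonoidHom.mulSingle _ i))
  have hf : ∀ x, φ (Pi.mulSingle i x) = Pi.mulSingle j (f x) := fun x => by
    obtain ⟨y, hy⟩ := hsingle x
    simp [f, ← hy]
  have hbij : Function.Bijective f := by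
    refine ⟨fun x x' hxx' => ?_, fun y => ?_⟩
    · have := hf x
      rw [hxx', ← hf x'] at this
      exact Pi.mulSingle_injective i (φ.injective this)
    · obtain ⟨_, ⟨x, rfl⟩, hx⟩ := h.ge (mulSingle_mem_factorSubgroup j y)
      refine ⟨x, Pi.mulSingle_injective (M := fun _ => G) j ?_⟩
      rw [← hf]
      exact hx
  exact ⟨MulEquiv.ofBijective f hbij, hf⟩

end Factors

@[simps]
def piMulAut (ι G : Type*) [Group G] : (ι → MulAut G) →* MulAut (ι → G) where
  toFun := MulEquiv.piCongrRight
  map_one' := rfl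
  map_mul' _ _ := rfl

section PowerAut

variable (G : Type) [Group G] (N : ℕ)

def powerAutHom :
    SemidirectProduct (Fin N → MulAut G) (Equiv.Perm (Fin N)) (permMulAut N (MulAut G)) →*
      MulAut (Fin N → G) :=
  SemidirectProduct.lift (piMulAut (Fin N) G) (permMulAut N G) fun σ => by
    ext η f i
    simp [permMulAut]

def outPowerHom :
    SemidirectProduct (Fin N → MulAut G) (Equiv.Perm (Fin N)) (permMulAut N (MulAut G)) →*
      SemidirectProduct (Fin N → Out G) (Equiv.Perm (Fin N)) (permMulAut N (Out G)) :=
  SemidirectProduct.map ((QuotientGroup.mk' _).compLeft (Fin N)) (MonoidHom.id _) fun _ => rfl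

variable {G N}
variable (x : SemidirectProduct (Fin N → MulAut G) (Equiv.Perm (Fin N)) (permMulAut N (MulAut G)))

theorem powerAutHom_apply (f : Fin N → G) (j : Fin N) :
    powerAutHom G N x f j = x.left j (f (x.right⁻¹ j)) :=
  rfl

theorem powerAutHom_apply_mulSingle (i : Fin N) (a : G) :
    powerAutHom G N x (Pi.mulSingle i a) = Pi.mulSingle (x.right i) (x.left (x.right i) a) := by
  funext j
  rw [powerAutHom_apply]
  rcases eq_or_ne j (x.right i) with rfl | hj
  · simp
  · have : x.right⁻¹ j ≠ i := fun h => hj (by simp [← h])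
    rw [Pi.mulSingle_eq_of_ne this, Pi.mulSingle_eq_of_ne hj, map_one]

theorem powerAutHom_inl_conj (g : Fin N → G) :
    powerAutHom G N (SemidirectProduct.inl fun j => MulAut.conj (g j)) = MulAut.conj g := by
  ext f i
  simp [powerAutHom]

theorem powerAutHom_injective [Nontrivial G] : Function.Injective (powerAutHom G N) := by
  refine (injective_iff_map_eq_one _).2 fun x hx => ?_
  have hx' : ∀ i (a : G),
      Pi.mulSingle (x.right i) (x.left (x.right i) a) = (Pi.mulSingle i a : Fin N → G) := by
    intro i a
    rw [← powerAutHom_apply_mulSingle, hx]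
    rfl
  have hright : ∀ i, x.right i = i := by
    intro i
    obtain ⟨a, ha⟩ := exists_ne (1 : G)
    by_contra h
    have := congrFun (hx' i a) i
    rw [Pi.mulSingle_eq_of_ne (Ne.symm h), Pi.mulSingle_eq_same] at this
    exact ha this.symm
  refine SemidirectProduct.ext (funext fun i => MulEquiv.ext fun a => ?_) (Equiv.ext hright)
  have := hx' i a
  rw [hright] at this
  exact Pi.mulSingle_injective (M := fun _ => G) i this

theorem powerAutHom_surjective [IsSimpleGroup G] (hG : Subgroup.center G = ⊥) :
    Function.Surjective (powerAutHom G N) := by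
  intro φ
  obtain ⟨σ, hσ⟩ := exists_perm_map_factorSubgroup_eq hG φ
  choose α hα using fun i => exists_mulAut_map_mulSingle φ (hσ i)
  refine ⟨⟨fun j => α (σ.symm j), σ⟩, MulEquiv.toMonoidHom_injective <|
    MonoidHom.pi_ext fun i a => ?_⟩
  simp [powerAutHom_apply_mulSingle, hα]

theorem outPowerHom_surjective : Function.Surjective (outPowerHom G N) := by
  rintro ⟨o, σ⟩
  choose η hη using fun j => QuotientGroup.mk_surjective (o j)
  exact ⟨⟨η, σ⟩, SemidirectProduct.ext (funext hη) rfl⟩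

theorem outPowerHom_eq_one_iff :
    outPowerHom G N x = 1 ↔
      ∃ g : Fin N → G, x = SemidirectProduct.inl fun j => MulAut.conj (g j) := by
  constructor
  · intro h
    have hleft : ∀ j, x.left j ∈ (MulAut.conj : G →* MulAut G).range := fun j =>
      (QuotientGroup.eq_one_iff _).1 (congrFun (congrArg SemidirectProduct.left h) j)
    have hright : x.right = 1 := congrArg SemidirectProduct.right h
    choose g hg using hleft
    exact ⟨g, SemidirectProduct.ext (funext fun j => (hg j).symm) hright⟩
  · rintro ⟨g, rfl⟩
    exact SemidirectProduct.ext (funext fun j => (QuotientGroup.eq_one_iff _).2 ⟨g j, rfl⟩) rfl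

end PowerAut

theorem out_power_iso_general (G₀ : Type) [Group G₀] [IsSimpleGroup G₀]
    (hna : ¬ ∀ a b : G₀, a * b = b * a) (N : ℕ) :
    Nonempty (Out (Fin N → G₀) ≃*
      SemidirectProduct (Fin N → Out G₀) (Equiv.Perm (Fin N))
        (permMulAut N (Out G₀))) := by
  have hG := IsSimpleGroup.center_eq_bot hna
  let e := MulEquiv.ofBijective (powerAutHom G₀ N)
    ⟨powerAutHom_injective, powerAutHom_surjective hG⟩
  let Φ := (outPowerHom G₀ N).comp e.symm.toMonoidHom
  have hker : Φ.ker = (MulAut.conj : (Fin N → G₀) →* MulAut (Fin N → G₀)).range := by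
    ext φ
    refine (outPowerHom_eq_one_iff _).trans (exists_congr fun g => ?_)
    rw [MulEquiv.coe_toMonoidHom, MulEquiv.symm_apply_eq]
    show φ = powerAutHom G₀ N _ ↔ _
    rw [powerAutHom_inl_conj, eq_comm]
  have hΦ : Function.Surjective Φ := outPowerHom_surjective.comp e.symm.surjective
  exact ⟨(QuotientGroup.quotientMulEquivOfEq hker.symm).trans
    (QuotientGroup.quotientKerEquivOfSurjective Φ hΦ)⟩

/-- For a finite non-abelian simple group `G₀` and `N ≥ 1`,
`Out(G₀^N) ≅ Out(G₀)^N ⋊ S_N`, with `S_N` permuting the factors. -/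
theorem out_power_iso (G₀ : Type) [Group G₀] [Finite G₀] [IsSimpleGroup G₀]
    (hna : ¬ ∀ a b : G₀, a * b = b * a) (N : ℕ) (hN : 1 ≤ N) :
    Nonempty (Out (Fin N → G₀) ≃*
      SemidirectProduct (Fin N → Out G₀) (Equiv.Perm (Fin N))
        (permMulAut N (Out G₀))) :=
  out_power_iso_general G₀ hna N
end

section
/- Let G₀ be a finite non-abelian simple group such that the exact sequence 1 → Inn(G₀) → Aut(G₀) → Out(G₀) → 1 splits. Then for every N ≥ 1 and every finite group G, every extension of G₀^N by G is a semidirect product G₀^N ⋊ G. -/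
/-!
Write `K = G₀^N`. As `G₀` is non-abelian simple, the factors of `K` are its minimal normal
subgroups, so every automorphism of `K` permutes them and acts factorwise:
`Aut(K) = Aut(G₀) ≀ S_N`. A splitting `σ` of `Aut(G₀) → Out(G₀)` makes `σ(Out(G₀)) ≀ S_N` a
complement of `Inn(K) = Inn(G₀)^N` in `Aut(K)`. Since `K` is centerless, `K ≅ Inn(K)`, so the
preimage of this complement under the conjugation action `Γ → Aut(K)` is a complement of `K`
in `Γ`, which `π` maps isomorphically onto `G`.
-/

open Function
open scoped commutatorElement

lemma center_eq_bot_of_not_comm {H : Type*} [Group H] [IsSimpleGroup H]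
    (hna : ¬ ∀ a b : H, a * b = b * a) : Subgroup.center H = ⊥ :=
  (IsSimpleGroup.eq_bot_or_eq_top_of_normal _ inferInstance).resolve_right fun h =>
    hna fun a b => (Subgroup.mem_center_iff.1 (h ▸ Subgroup.mem_top a) b).symm

namespace PiFactor

variable {ι G₀ : Type*} [DecidableEq ι] [Group G₀]

def factor (i : ι) : Subgroup (ι → G₀) := (MonoidHom.mulSingle (fun _ => G₀) i).range

lemma mulSingle_mem_factor (i : ι) (g : G₀) : Pi.mulSingle i g ∈ factor i := ⟨g, rfl⟩

lemma eq_mulSingle_of_mem_factor {i : ι} {x : ι → G₀} (hx : x ∈ factor i) :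
    x = Pi.mulSingle i (x i) := by
  obtain ⟨g, rfl⟩ := hx
  simp

instance factor_normal (i : ι) : (factor i : Subgroup (ι → G₀)).Normal := by
  refine ⟨?_⟩
  rintro _ ⟨g, rfl⟩ x
  refine ⟨x i * g * (x i)⁻¹, funext fun j => ?_⟩
  by_cases hj : j = i
  · subst hj; simp
  · simp [Pi.mulSingle_eq_of_ne hj]

lemma factor_le_factor_iff [Nontrivial G₀] {i k : ι} :
    (factor k : Subgroup (ι → G₀)) ≤ factor i ↔ k = i := by
  refine ⟨fun h => ?_, fun h => h ▸ le_rfl⟩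
  obtain ⟨g, hg⟩ := exists_ne (1 : G₀)
  by_contra hki
  have := congrFun (eq_mulSingle_of_mem_factor (h (mulSingle_mem_factor k g))) k
  simp [Pi.mulSingle_eq_of_ne hki] at this
  exact hg this

lemma commute_of_apply_eq_one {i : ι} {y z : ι → G₀} (hy : y i = 1) (hz : z ∈ factor i) :
    Commute y z := by
  obtain ⟨g, rfl⟩ := hz
  refine funext fun j => ?_
  by_cases hj : j = i
  · subst hj; simp [hy]
  · simp [Pi.mulSingle_eq_of_ne hj]

lemma apply_eq_apply_mulSingle (hZ : Subgroup.center G₀ = ⊥) {α : MulAut (ι → G₀)} {i j : ι}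
    (h : (factor i).map (α : (ι → G₀) →* ι → G₀) = factor j) (x : ι → G₀) :
    α x j = α (Pi.mulSingle i (x i)) j := by
  set y := (Pi.mulSingle i (x i))⁻¹ * x
  have hy : y i = 1 := by simp [y]
  -- `y` commutes with `factor i`, so `α y` commutes with `factor j`.
  have hαy : α y j = 1 := by
    refine Subgroup.mem_bot.1 (hZ ▸ Subgroup.mem_center_iff.2 fun g => ?_)
    obtain ⟨z, hz, hαz⟩ : Pi.mulSingle j g ∈ (factor i).map (α : (ι → G₀) →* ι → G₀) :=
      h ▸ mulSingle_mem_factor j g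
    have := congrFun ((commute_of_apply_eq_one hy hz).map α).eq j
    simp only [MonoidHom.coe_coe] at hαz
    simpa [hαz] using this.symm
  calc α x j = α (Pi.mulSingle i (x i) * y) j := by simp [y]
    _ = α (Pi.mulSingle i (x i)) j := by simp [hαy]

variable [IsSimpleGroup G₀]

lemma factor_le_of_mem_normal (hZ : Subgroup.center G₀ = ⊥) {M : Subgroup (ι → G₀)}
    [M.Normal] {x : ι → G₀} (hx : x ∈ M) {i : ι} (hxi : x i ≠ 1) : factor i ≤ M := by
  obtain ⟨g, hg⟩ : ∃ g : G₀, ⁅x i, g⁆ ≠ 1 := by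
    by_contra! h
    refine hxi (Subgroup.mem_bot.1 (hZ ▸ Subgroup.mem_center_iff.2 fun g => ?_))
    exact (commutatorElement_eq_one_iff_mul_comm.1 (h g)).symm
  have hcomm : ⁅x, Pi.mulSingle i g⁆ = (Pi.mulSingle i ⁅x i, g⁆ : ι → G₀) := by
    refine funext fun j => ?_
    by_cases hj : j = i
    · subst hj; simp [commutatorElement_def]
    · simp [commutatorElement_def, Pi.mulSingle_eq_of_ne hj]
  have hS : M.comap (MonoidHom.mulSingle _ i) = ⊤ := by
    refine (IsSimpleGroup.eq_bot_or_eq_top_of_normal _ inferInstance).resolve_left fun h => hg ?_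
    rw [← Subgroup.mem_bot, ← h, Subgroup.mem_comap, MonoidHom.mulSingle_apply, ← hcomm]
    exact Subgroup.commutator_le_left M ⊤ (Subgroup.commutator_mem_commutator hx trivial)
  rintro _ ⟨h, rfl⟩
  exact Subgroup.mem_comap.1 (hS ▸ Subgroup.mem_top h)

lemma exists_factor_le_map (hZ : Subgroup.center G₀ = ⊥) (α : MulAut (ι → G₀)) (i : ι) :
    ∃ j, factor j ≤ (factor i).map (α : (ι → G₀) →* ι → G₀) := by
  obtain ⟨g, hg⟩ := exists_ne (1 : G₀)
  have hne : α (Pi.mulSingle i g) ≠ 1 := by simpa using hg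
  obtain ⟨j, hj⟩ := Function.ne_iff.1 hne
  have := (factor_normal i).map (α : (ι → G₀) →* ι → G₀) α.surjective
  exact ⟨j, factor_le_of_mem_normal hZ (Subgroup.mem_map_of_mem _ (mulSingle_mem_factor i g)) hj⟩

lemma exists_map_factor_eq (hZ : Subgroup.center G₀ = ⊥) (α : MulAut (ι → G₀)) (i : ι) :
    ∃ j, (factor i).map (α : (ι → G₀) →* ι → G₀) = factor j := by
  obtain ⟨j, hj⟩ := exists_factor_le_map hZ α i
  obtain ⟨k, hk⟩ := exists_factor_le_map hZ α.symm j
  have hj' : (factor j).map (α.symm : (ι → G₀) →* ι → G₀) ≤ factor i :=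
    Subgroup.map_le_iff_le_comap.2 (by rwa [← Subgroup.map_equiv_eq_comap_symm])
  obtain rfl : k = i := factor_le_factor_iff.1 (hk.trans hj')
  refine ⟨j, le_antisymm (Subgroup.map_le_iff_le_comap.2 ?_) hj⟩
  rwa [Subgroup.comap_equiv_eq_map_symm]

lemma exists_perm_map_factor_eq (hZ : Subgroup.center G₀ = ⊥) (α : MulAut (ι → G₀)) :
    ∃ ρ : Equiv.Perm ι, ∀ i, (factor i).map (α : (ι → G₀) →* ι → G₀) = factor (ρ i) := by
  choose r hr using exists_map_factor_eq hZ α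
  have hr_inj : Injective r := fun i i' h => factor_le_factor_iff.1 <|
    (Subgroup.map_injective α.injective ((hr i).trans (h ▸ (hr i').symm))).le
  have hr_surj : Surjective r := fun j => by
    obtain ⟨k, hk⟩ := exists_map_factor_eq hZ α.symm j
    have : factor (r k) = factor j := (hr k).symm.trans ((Subgroup.map_symm_eq_iff_map_eq _).1 hk)
    exact ⟨k, factor_le_factor_iff.1 this.le⟩
  exact ⟨Equiv.ofBijective r ⟨hr_inj, hr_surj⟩, hr⟩

theorem exists_perm_mulAut_apply (hZ : Subgroup.center G₀ = ⊥) (α : MulAut (ι → G₀)) :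
    ∃ (ρ : Equiv.Perm ι) (b : ι → MulAut G₀), ∀ x i, α x (ρ i) = b i (x i) := by
  obtain ⟨ρ, hρ⟩ := exists_perm_map_factor_eq hZ α
  let β (i : ι) : G₀ →* G₀ := (Pi.evalMonoidHom (fun _ => G₀) (ρ i)).comp
    ((α : (ι → G₀) →* ι → G₀).comp (MonoidHom.mulSingle (fun _ => G₀) i))
  have hβ (x : ι → G₀) (i : ι) : α x (ρ i) = β i (x i) := apply_eq_apply_mulSingle hZ (hρ i) x
  have hβ_bij (i : ι) : Bijective (β i) := by
    refine ⟨(injective_iff_map_eq_one _).2 fun g hg => ?_, fun g => ?_⟩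
    · have : α (Pi.mulSingle i g) = 1 := funext fun j => by
        obtain ⟨k, rfl⟩ := ρ.surjective j
        rw [hβ]
        by_cases hk : k = i
        · subst hk; simpa using hg
        · simp [Pi.mulSingle_eq_of_ne hk]
      simpa using this
    · exact ⟨α.symm (Pi.mulSingle (ρ i) g) i, by rw [← hβ]; simp⟩
  exact ⟨ρ, fun i => MulEquiv.ofBijective (β i) (hβ_bij i), hβ⟩

end PiFactor

section Wreath

variable {ι G₀ : Type*} [Group G₀]

/-- The image of `A ≀ Sym(ι)` in `Aut(G₀^ι)`. -/
def wreathAut (A : Subgroup (MulAut G₀)) : Subgroup (MulAut (ι → G₀)) where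
  carrier := {α | ∃ (ρ : Equiv.Perm ι) (a : ι → MulAut G₀),
    (∀ i, a i ∈ A) ∧ ∀ x i, α x (ρ i) = a i (x i)}
  one_mem' := ⟨1, 1, fun _ => one_mem A, fun _ _ => rfl⟩
  mul_mem' := by
    rintro α α' ⟨ρ, a, ha, hα⟩ ⟨ρ', a', ha', hα'⟩
    refine ⟨ρ'.trans ρ, fun i => a (ρ' i) * a' i, fun i => mul_mem (ha _) (ha' i),
      fun x i => ?_⟩
    simp [hα, hα']
  inv_mem' := by
    rintro α ⟨ρ, a, ha, hα⟩
    refine ⟨ρ.symm, fun i => (a (ρ.symm i))⁻¹, fun i => inv_mem (ha _), fun x i => ?_⟩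
    have := hα (α⁻¹ x) (ρ.symm i)
    simp only [Equiv.apply_symm_apply, MulAut.inv_apply, MulEquiv.apply_symm_apply] at this ⊢
    rw [this, MulEquiv.symm_apply_apply]

variable [DecidableEq ι]

lemma exists_conj_inv_mul_mem_wreathAut [IsSimpleGroup G₀] (hZ : Subgroup.center G₀ = ⊥)
    {A : Subgroup (MulAut G₀)} (hA : ∀ β : MulAut G₀, ∃ m, (MulAut.conj m)⁻¹ * β ∈ A)
    (α : MulAut (ι → G₀)) : ∃ k, (MulAut.conj k)⁻¹ * α ∈ wreathAut A := by
  obtain ⟨ρ, b, hb⟩ := PiFactor.exists_perm_mulAut_apply hZ α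
  choose m hm using fun i => hA (b i)
  refine ⟨fun j => m (ρ.symm j), ρ, fun i => (MulAut.conj (m i))⁻¹ * b i, hm, fun x i => ?_⟩
  simp [hb]

lemma eq_one_of_conj_mem_wreathAut [Nontrivial G₀] {A : Subgroup (MulAut G₀)}
    (hA : ∀ m, MulAut.conj m ∈ A → m = 1) (k : ι → G₀)
    (hk : MulAut.conj k ∈ wreathAut A) : k = 1 := by
  obtain ⟨ρ, a, ha, hconj⟩ := hk
  simp only [MulAut.conj_apply, Pi.mul_apply, Pi.inv_apply] at hconj
  obtain ⟨g, hg⟩ := exists_ne (1 : G₀)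
  have hρ (i : ι) : ρ i = i := by
    by_contra hi
    have := hconj (Pi.mulSingle i g) i
    simp [Pi.mulSingle_eq_of_ne hi] at this
    exact hg ((a i).map_eq_one_iff.1 this.symm)
  refine funext fun i => hA _ ?_
  convert ha i using 1
  ext g'
  simpa [hρ] using hconj (Pi.mulSingle i g') i

end Wreath

section OuterSplitting

variable {H : Type} [Group H]
  {σ : (MulAut H ⧸ (MulAut.conj : H →* MulAut H).range) →* MulAut H}

lemma exists_conj_inv_mul_mem_range_of_splitting
    (hσ : ∀ a, QuotientGroup.mk' ((MulAut.conj : H →* MulAut H).range) (σ a) = a)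
    (β : MulAut H) : ∃ m, (MulAut.conj m)⁻¹ * β ∈ σ.range := by
  set q := QuotientGroup.mk' ((MulAut.conj : H →* MulAut H).range) β
  obtain ⟨m, hm⟩ : β * (σ q)⁻¹ ∈ (MulAut.conj : H →* MulAut H).range :=
    (QuotientGroup.ker_mk' _).le (by rw [MonoidHom.mem_ker, map_mul, map_inv, hσ, mul_inv_cancel])
  exact ⟨m, q, by rw [hm]; group⟩

lemma eq_one_of_conj_mem_range_of_splitting (hZ : Subgroup.center H = ⊥)
    (hσ : ∀ a, QuotientGroup.mk' ((MulAut.conj : H →* MulAut H).range) (σ a) = a)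
    (m : H) (hm : MulAut.conj m ∈ σ.range) : m = 1 := by
  obtain ⟨q, hq⟩ := hm
  have hq1 : q = 1 := by
    rw [← hσ q, hq, ← MonoidHom.mem_ker, QuotientGroup.ker_mk']
    exact ⟨m, rfl⟩
  have hconj : MulAut.conj m = 1 := by rw [← hq, hq1, map_one]
  refine Subgroup.mem_bot.1 (hZ ▸ Subgroup.mem_center_iff.2 fun g => ?_)
  have := DFunLike.congr_fun hconj g
  rw [MulAut.conj_apply, MulAut.one_apply, mul_inv_eq_iff_eq_mul] at this
  exact this.symm

end OuterSplitting

section Extension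

variable {K Γ G : Type*} [Group K] [Group Γ] [Group G]

noncomputable def conjAutOfInjective (ι : K →* Γ) (hι : Injective ι) [ι.range.Normal] :
    Γ →* MulAut K :=
  (MulAut.congr (MonoidHom.ofInjective hι).symm).toMonoidHom.comp MulAut.conjNormal

lemma conjAutOfInjective_apply_self (ι : K →* Γ) (hι : Injective ι) [ι.range.Normal] (k : K) :
    conjAutOfInjective ι hι (ι k) = MulAut.conj k := by
  ext x
  apply hι
  simp [conjAutOfInjective, MonoidHom.ofInjective_apply]

theorem exists_section_of_complement_inn (ι : K →* Γ) (π : Γ →* G) (hι : Injective ι)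
    (hπ : Surjective π) (hexact : ι.range = π.ker) (C : Subgroup (MulAut K))
    (hC : ∀ α, ∃ k, (MulAut.conj k)⁻¹ * α ∈ C) (hC_inn : ∀ k, MulAut.conj k ∈ C → k = 1) :
    ∃ s : G →* Γ, ∀ g, π (s g) = g := by
  have : ι.range.Normal := hexact ▸ π.normal_ker
  set Φ := conjAutOfInjective ι hι
  set T := C.comap Φ
  have hinj : Injective (π.comp T.subtype) := (injective_iff_map_eq_one _).2 fun t ht => by
    obtain ⟨k, hk⟩ : (t : Γ) ∈ ι.range := hexact ▸ ht
    have hk1 : k = 1 := hC_inn k (by rw [← conjAutOfInjective_apply_self ι hι, hk]; exact t.2)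
    ext
    simp [← hk, hk1]
  have hsurj : Surjective (π.comp T.subtype) := fun g => by
    obtain ⟨γ, rfl⟩ := hπ g
    obtain ⟨k, hk⟩ := hC (Φ γ)
    have hπk : π (ι k) = 1 := π.mem_ker.1 (hexact ▸ ⟨k, rfl⟩)
    refine ⟨⟨ι k⁻¹ * γ, ?_⟩, by simp [hπk]⟩
    rwa [Subgroup.mem_comap, map_mul, conjAutOfInjective_apply_self, map_inv]
  let e := MulEquiv.ofBijective _ ⟨hinj, hsurj⟩
  exact ⟨T.subtype.comp e.symm.toMonoidHom, e.apply_symm_apply⟩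

end Extension

theorem extension_of_power_splits_general (G₀ : Type) [Group G₀] [IsSimpleGroup G₀]
    (hna : ¬ ∀ a b : G₀, a * b = b * a)
    (hsplit : ∃ σ : (MulAut G₀ ⧸ (MulAut.conj : G₀ →* MulAut G₀).range) →* MulAut G₀,
      ∀ a, QuotientGroup.mk' ((MulAut.conj : G₀ →* MulAut G₀).range) (σ a) = a)
    (N : ℕ)
    (Γ G : Type) [Group Γ] [Group G]
    (ι : (Fin N → G₀) →* Γ) (π : Γ →* G) (hι : Function.Injective ι)
    (hπ : Function.Surjective π) (hexact : ι.range = π.ker) :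
    ∃ s : G →* Γ, ∀ g, π (s g) = g := by
  obtain ⟨σ, hσ⟩ := hsplit
  have hZ := center_eq_bot_of_not_comm hna
  exact exists_section_of_complement_inn ι π hι hπ hexact (wreathAut σ.range)
    (exists_conj_inv_mul_mem_wreathAut hZ (exists_conj_inv_mul_mem_range_of_splitting hσ))
    (eq_one_of_conj_mem_wreathAut (eq_one_of_conj_mem_range_of_splitting hZ hσ))

/-- If `G₀` is a finite non-abelian simple group whose exact sequence
`1 → Inn(G₀) → Aut(G₀) → Out(G₀) → 1` splits, then for every `N ≥ 1` and every finite
group `G`, every extension of `G₀^N` by `G` splits, i.e. is a semidirect product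
`G₀^N ⋊ G`. -/
theorem extension_of_power_splits (G₀ : Type) [Group G₀] [Finite G₀] [IsSimpleGroup G₀]
    (hna : ¬ ∀ a b : G₀, a * b = b * a)
    (hsplit : ∃ σ : (MulAut G₀ ⧸ (MulAut.conj : G₀ →* MulAut G₀).range) →* MulAut G₀,
      ∀ a, QuotientGroup.mk' ((MulAut.conj : G₀ →* MulAut G₀).range) (σ a) = a)
    (N : ℕ) (hN : 1 ≤ N)
    (Γ G : Type) [Group Γ] [Group G] [Finite G]
    (ι : (Fin N → G₀) →* Γ) (π : Γ →* G) (hι : Function.Injective ι)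
    (hπ : Function.Surjective π) (hexact : ι.range = π.ker) :
    ∃ s : G →* Γ, ∀ g, π (s g) = g :=
  extension_of_power_splits_general G₀ hna hsplit N Γ G ι π hι hπ hexact
end
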